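/- Let T>0 and E a separable Banach space. For each λ∈[0,1] let {A^{(λ)}(t)}_{t∈[0,T]} be a family of linear operators on E having an associated evolution system R^{(λ)}, and assume {R^{(λ)}}_{λ∈[0,1]} is a continuous family of evolution systems. Let F:[0,T]×E×[0,1]→E be continuous, locally Lipschitz in the second variable uniformly with respect to the other variables, of sublinear growth in the second variable uniformly with respect to the others (‖F(t,x,λ)‖≤c(1+‖x‖) for some c>0), and a k-set contraction for some k≥0, i.e. β(F([0,T]×Q×[0,1]))≤kβ(Q) for every bounded Q⊂E. Denote by u(·;0,T,x,λ) the unique mild solution of u'(t)=A^{(λ)}(t)u(t)+F(t,u(t),λ), u(0)=x. Then whenever (x_n,λ_n)→(x_0,λ_0) in E×[0,1], the mild solutions u(·;0,T,x_n,λ_n) converge to u(·;0,T,x_0,λ_0) in C([0,T],E). -/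

import Mathlib

/-!
Banach–Steinhaus bounds all operators `R^{(λₙ)}(t,s)` and `R^{(λ₀)}(t,s)` by one constant `M`.
Equibounded operators converging strongly, uniformly in `(t,s)`, converge uniformly on totally
bounded sets of vectors; applied to `{x₀}` and to the compact set `{F(s,u₀(s),λ₀) : s ∈ [0,T]}`,
this shows that `u₀` solves the `n`-th mild equation up to an error tending to `0` uniformly.

`F` is Lipschitz, with one constant `L`, on a `δ`-tube around the compact trajectory `u₀([0,T])`.
While `uₙ` stays in that tube, Grönwall bounds `‖uₙ(t) - u₀(t)‖` by `a e^{MLt}`, where `a` bounds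
the error; once `a e^{MLT} ≤ δ`, a first-exit-time argument shows that `uₙ` never leaves it.
-/

open Filter Topology Set MeasureTheory

noncomputable section

variable {E : Type*} [NormedAddCommGroup E] [NormedSpace ℝ E]

/-- An evolution system `{R(t,s)}_{0 ≤ s ≤ t ≤ T}` on `E`. -/
structure IsEvolutionSystem (T : ℝ) (R : ℝ → ℝ → E →L[ℝ] E) : Prop where
  refl : ∀ t ∈ Icc (0 : ℝ) T, R t t = 1
  comp : ∀ ⦃s r t : ℝ⦄, 0 ≤ s → s ≤ r → r ≤ t → t ≤ T → R t s = (R t r).comp (R r s)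
  strong_cont : ∀ x : E, ContinuousOn (fun p : ℝ × ℝ => R p.1 p.2 x)
    {p : ℝ × ℝ | 0 ≤ p.2 ∧ p.2 ≤ p.1 ∧ p.1 ≤ T}

/-- The parameter domain `{(t,s) : 0 ≤ s ≤ t ≤ T}` of an evolution system. -/
def evolDomain (T : ℝ) : Set (ℝ × ℝ) := {p : ℝ × ℝ | 0 ≤ p.2 ∧ p.2 ≤ p.1 ∧ p.1 ≤ T}

/-- A family `{R^{(λ)}}_{λ∈[0,1]}` of evolution systems is continuous: for every `x ∈ E`
and every sequence `λₙ → λ₀` in `[0,1]`, `R^{(λₙ)}(t,s)x → R^{(λ₀)}(t,s)x` uniformly in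
`0 ≤ s ≤ t ≤ T`. -/
def IsContinuousEvolFamily (T : ℝ) (R : ℝ → ℝ → ℝ → E →L[ℝ] E) : Prop :=
  ∀ (x : E) (l : ℕ → ℝ) (l0 : ℝ), (∀ n, l n ∈ Icc (0 : ℝ) 1) → l0 ∈ Icc (0 : ℝ) 1 →
    Tendsto l atTop (𝓝 l0) →
    TendstoUniformlyOn (fun n p => R (l n) p.1 p.2 x) (fun p => R l0 p.1 p.2 x)
      atTop (evolDomain T)

/-- The map `Σ(x,w,λ)(t) = R^{(λ)}(t,0)x + ∫₀ᵗ R^{(λ)}(t,s) w(s) ds`. -/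
def evolMap (R : ℝ → ℝ → E →L[ℝ] E) (x : E) (w : ℝ → E) (t : ℝ) : E :=
  R t 0 x + ∫ s in (0 : ℝ)..t, R t s (w s)

/-- The Hausdorff measure of noncompactness of a set `Q`. -/
def hausdorffMNC (Q : Set E) : ℝ :=
  sInf {r : ℝ | 0 < r ∧ ∃ c : Finset E, Q ⊆ ⋃ y ∈ c, Metric.ball y r}

variable (T : ℝ) in
/-- `u` is a mild solution on `[0,T]` of `u' = A(t)u + g(t,u)`, `u(0) = x`, for the evolution
system `R` associated with `{A(t)}`. -/
def IsMildSolution (R : ℝ → ℝ → E →L[ℝ] E) (g : ℝ → E → E) (x : E) (u : ℝ → E) : Prop :=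
  ContinuousOn u (Icc (0 : ℝ) T) ∧
  ∀ t ∈ Icc (0 : ℝ) T, u t = R t 0 x + ∫ s in (0 : ℝ)..t, R t s (g s (u s))

/-- `F(t,x,λ)` is continuous on `[0,T] × E × [0,1]`. -/
def ParamContinuous (T : ℝ) (F : ℝ → E → ℝ → E) : Prop :=
  ContinuousOn (fun p : ℝ × E × ℝ => F p.1 p.2.1 p.2.2)
    (Icc (0 : ℝ) T ×ˢ (univ : Set E) ×ˢ Icc (0 : ℝ) 1)

/-- `F` is locally Lipschitz in the second variable, uniformly in the other variables. -/
def ParamLocallyLipschitz (T : ℝ) (F : ℝ → E → ℝ → E) : Prop :=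
  ∀ x : E, ∃ r > (0 : ℝ), ∃ Lc > (0 : ℝ), ∀ t ∈ Icc (0 : ℝ) T, ∀ lam ∈ Icc (0 : ℝ) 1,
    ∀ x₁ ∈ Metric.ball x r, ∀ x₂ ∈ Metric.ball x r,
      ‖F t x₁ lam - F t x₂ lam‖ ≤ Lc * ‖x₁ - x₂‖

/-- `F` has sublinear growth in the second variable, uniformly in the other variables. -/
def ParamSublinear (T : ℝ) (F : ℝ → E → ℝ → E) : Prop :=
  ∃ c > (0 : ℝ), ∀ t ∈ Icc (0 : ℝ) T, ∀ lam ∈ Icc (0 : ℝ) 1, ∀ x : E,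
    ‖F t x lam‖ ≤ c * (1 + ‖x‖)

/-- The image `F([0,T] × Q × [0,1])`. -/
def paramImage (T : ℝ) (F : ℝ → E → ℝ → E) (Q : Set E) : Set E :=
  {y : E | ∃ t ∈ Icc (0 : ℝ) T, ∃ x ∈ Q, ∃ lam ∈ Icc (0 : ℝ) 1, y = F t x lam}


theorem TendstoUniformlyOn.exists_forall_norm_le {α G : Type*} [SeminormedAddCommGroup G]
    {f : ℕ → α → G} {g : α → G} {s : Set α} (h : TendstoUniformlyOn f g atTop s)
    (hf : ∀ n, ∃ C, ∀ a ∈ s, ‖f n a‖ ≤ C) (hg : ∃ C, ∀ a ∈ s, ‖g a‖ ≤ C) :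
    ∃ C, ∀ n, ∀ a ∈ s, ‖f n a‖ ≤ C := by
  obtain ⟨C₀, hC₀⟩ := hg
  choose C hC using hf
  obtain ⟨N, hN⟩ := eventually_atTop.1 (Metric.tendstoUniformlyOn_iff.1 h 1 one_pos)
  refine ⟨max (C₀ + 1) (∑ m ∈ Finset.range N, |C m|), fun n a ha => ?_⟩
  rcases lt_or_ge n N with hn | hn
  · calc ‖f n a‖ ≤ |C n| := (hC n a ha).trans (le_abs_self _)
      _ ≤ ∑ m ∈ Finset.range N, |C m| :=
        Finset.single_le_sum (fun m _ => abs_nonneg (C m)) (Finset.mem_range.2 hn)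
      _ ≤ _ := le_max_right _ _
  · have hclose := hN n hn a ha
    rw [dist_eq_norm'] at hclose
    calc ‖f n a‖ ≤ ‖g a‖ + ‖f n a - g a‖ := norm_le_insert' _ _
      _ ≤ C₀ + 1 := add_le_add (hC₀ a ha) hclose.le
      _ ≤ _ := le_max_left _ _

theorem forall_lt_of_forall_lt_on_Ico {φ ψ : ℝ → ℝ} {a b : ℝ} (hφ : ContinuousOn φ (Icc a b))
    (hψ : ContinuousOn ψ (Icc a b))
    (h : ∀ t ∈ Icc a b, (∀ s ∈ Ico a t, φ s < ψ s) → φ t < ψ t) :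
    ∀ t ∈ Icc a b, φ t < ψ t := by
  by_contra! hfail
  set B := {t ∈ Icc a b | ψ t ≤ φ t}
  have hBbdd : BddBelow B := ⟨a, fun t ht => ht.1.1⟩
  have hfirst : sInf B ∈ B := (isClosed_Icc.isClosed_le hψ hφ).csInf_mem hfail hBbdd
  refine (h _ hfirst.1 fun s hs => ?_).not_ge hfirst.2
  by_contra! hle
  exact notMem_of_lt_csInf hs.2 hBbdd ⟨⟨hs.1, hs.2.le.trans hfirst.1.2⟩, hle⟩

theorem integral_mul_exp_mul (a c t : ℝ) :
    ∫ s in (0 : ℝ)..t, c * (a * Real.exp (c * s)) = a * Real.exp (c * t) - a := by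
  have hderiv : ∀ s ∈ uIcc (0 : ℝ) t,
      HasDerivAt (fun s => a * Real.exp (c * s)) (c * (a * Real.exp (c * s))) s := fun s _ => by
    have h := ((hasDerivAt_id s).const_mul c).exp.const_mul a
    simp only [id, mul_one] at h
    rwa [show c * (a * Real.exp (c * s)) = a * (Real.exp (c * s) * c) by ring]
  rw [intervalIntegral.integral_eq_sub_of_hasDerivAt hderiv
    (Continuous.intervalIntegrable (by fun_prop) _ _)]
  simp

section OperatorFamilies

variable {ι X F : Type*} [NormedAddCommGroup F] [NormedSpace ℝ F] {l : Filter ι}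
  {A : ι → X → E →L[ℝ] F} {A₀ : X → E →L[ℝ] F} {s : Set X} {M : ℝ}

theorem ContinuousWithinAt.clm_apply_of_forall_norm_le [TopologicalSpace X] {w : X → E}
    {x : X} (hA : ContinuousWithinAt (fun y => A₀ y (w x)) s x) (hM : ∀ y ∈ s, ‖A₀ y‖ ≤ M)
    (hw : ContinuousWithinAt w s x) : ContinuousWithinAt (fun y => A₀ y (w y)) s x := by
  rw [ContinuousWithinAt, tendsto_iff_norm_sub_tendsto_zero] at hA hw ⊢
  have hbound : ∀ᶠ y in 𝓝[s] x,
      ‖A₀ y (w y) - A₀ x (w x)‖ ≤ M * ‖w y - w x‖ + ‖A₀ y (w x) - A₀ x (w x)‖ := by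
    filter_upwards [self_mem_nhdsWithin] with y hy
    calc ‖A₀ y (w y) - A₀ x (w x)‖ = ‖A₀ y (w y - w x) + (A₀ y (w x) - A₀ x (w x))‖ := by
          rw [map_sub]; abel_nf
      _ ≤ ‖A₀ y‖ * ‖w y - w x‖ + ‖A₀ y (w x) - A₀ x (w x)‖ :=
          (norm_add_le _ _).trans (add_le_add_left ((A₀ y).le_opNorm _) _)
      _ ≤ M * ‖w y - w x‖ + ‖A₀ y (w x) - A₀ x (w x)‖ := by gcongr; exact hM y hy
  have hlim := (hw.const_mul M).add hA
  rw [mul_zero, zero_add] at hlim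
  exact squeeze_zero' (Eventually.of_forall fun _ => norm_nonneg _) hbound hlim

theorem tendstoUniformlyOn_clm_apply_of_totallyBounded
    (hA : ∀ y, TendstoUniformlyOn (fun i x => A i x y) (fun x => A₀ x y) l s)
    (hM : ∀ i, ∀ x ∈ s, ‖A i x‖ ≤ M) (hM₀ : ∀ x ∈ s, ‖A₀ x‖ ≤ M) {K : Set E}
    (hK : TotallyBounded K) :
    TendstoUniformlyOn (fun i (q : X × E) => A i q.1 q.2) (fun q => A₀ q.1 q.2) l (s ×ˢ K) := by
  rw [Metric.tendstoUniformlyOn_iff]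
  intro ε hε
  set η := ε / (4 * (|M| + 1))
  have hMη : M * η ≤ ε / 4 := by
    calc M * η ≤ (|M| + 1) * η := by gcongr; linarith [le_abs_self M]
      _ = ε / 4 := by simp only [η]; field_simp
  obtain ⟨net, hnet, hKnet⟩ := Metric.totallyBounded_iff.1 hK η (by positivity)
  filter_upwards [(eventually_all_finite hnet).2 fun z _ =>
    Metric.tendstoUniformlyOn_iff.1 (hA z) (ε / 2) (half_pos hε)] with i hi
  rintro ⟨x, y⟩ ⟨hx, hy⟩
  obtain ⟨z, hz, hyz⟩ := mem_iUnion₂.1 (hKnet hy)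
  rw [Metric.mem_ball, dist_eq_norm] at hyz
  have hzy : ‖z - y‖ < η := by rwa [norm_sub_rev]
  have hM_nonneg : 0 ≤ M := (norm_nonneg _).trans (hM₀ x hx)
  have hnet_i := hi z hz x hx
  rw [dist_eq_norm] at hnet_i ⊢
  calc ‖A₀ x y - A i x y‖ = ‖A₀ x (y - z) + (A₀ x z - A i x z) + A i x (z - y)‖ := by
        simp only [map_sub]; abel_nf
    _ ≤ ‖A₀ x‖ * ‖y - z‖ + ‖A₀ x z - A i x z‖ + ‖A i x‖ * ‖z - y‖ :=
        norm_add₃_le.trans (add_le_add_three ((A₀ x).le_opNorm _) le_rfl ((A i x).le_opNorm _))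
    _ ≤ M * η + ‖A₀ x z - A i x z‖ + M * η :=
        add_le_add_three (mul_le_mul (hM₀ x hx) hyz.le (norm_nonneg _) hM_nonneg) le_rfl
          (mul_le_mul (hM i x hx) hzy.le (norm_nonneg _) hM_nonneg)
    _ < ε := by linarith

theorem TendstoUniformlyOn.clm_apply
    (hA : ∀ y, TendstoUniformlyOn (fun i x => A i x y) (fun x => A₀ x y) l s)
    (hM : ∀ i, ∀ x ∈ s, ‖A i x‖ ≤ M) (hM₀ : ∀ x ∈ s, ‖A₀ x‖ ≤ M) {v : ι → X → E} {v₀ : X → E}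
    (hv : TendstoUniformlyOn v v₀ l s) (hK : TotallyBounded (v₀ '' s)) :
    TendstoUniformlyOn (fun i x => A i x (v i x)) (fun x => A₀ x (v₀ x)) l s := by
  have hfixed : TendstoUniformlyOn (fun i x => A i x (v₀ x)) (fun x => A₀ x (v₀ x)) l s :=
    ((tendstoUniformlyOn_clm_apply_of_totallyBounded hA hM hM₀ hK).comp
      fun x => (x, v₀ x)).mono fun x hx => ⟨hx, mem_image_of_mem v₀ hx⟩
  rw [Metric.tendstoUniformlyOn_iff] at hfixed hv ⊢
  intro ε hε
  filter_upwards [hfixed (ε / 2) (half_pos hε), hv (ε / (2 * (|M| + 1))) (by positivity)]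
    with i hfixed_i hv_i x hx
  have hAv : ‖A i x (v₀ x - v i x)‖ ≤ ε / 2 := by
    calc ‖A i x (v₀ x - v i x)‖ ≤ (|M| + 1) * ‖v₀ x - v i x‖ :=
          ((A i x).le_opNorm _).trans (by gcongr; linarith [hM i x hx, le_abs_self M])
      _ ≤ (|M| + 1) * (ε / (2 * (|M| + 1))) := by
          gcongr; rw [← dist_eq_norm]; exact (hv_i x hx).le
      _ = ε / 2 := by field_simp
  calc dist (A₀ x (v₀ x)) (A i x (v i x))
      ≤ dist (A₀ x (v₀ x)) (A i x (v₀ x)) + dist (A i x (v₀ x)) (A i x (v i x)) :=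
        dist_triangle _ _ _
    _ < ε / 2 + ε / 2 := by
        rw [dist_eq_norm (A i x (v₀ x)), ← map_sub]
        exact add_lt_add_of_lt_of_le (hfixed_i x hx) hAv
    _ = ε := add_halves ε

end OperatorFamilies

theorem isCompact_evolDomain (T : ℝ) : IsCompact (evolDomain T) := by
  refine (isCompact_Icc.prod isCompact_Icc : IsCompact (Icc 0 T ×ˢ Icc 0 T)).of_isClosed_subset
    ?_ fun p ⟨h0, hst, htT⟩ => ⟨⟨h0.trans hst, htT⟩, ⟨h0, hst.trans htT⟩⟩
  exact (isClosed_le continuous_const continuous_snd).inter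
    ((isClosed_le continuous_snd continuous_fst).inter (isClosed_le continuous_fst continuous_const))

theorem tendstoUniformlyOn_intervalIntegral_of_evolDomain {ι : Type*} {l : Filter ι} {T : ℝ}
    {g : ι → ℝ → ℝ → E} {g₀ : ℝ → ℝ → E}
    (h : TendstoUniformlyOn (fun i (p : ℝ × ℝ) => g i p.1 p.2) (fun p => g₀ p.1 p.2) l
      (evolDomain T))
    (hg : ∀ i, ∀ t ∈ Icc 0 T, IntervalIntegrable (g i t) volume 0 t)
    (hg₀ : ∀ t ∈ Icc 0 T, IntervalIntegrable (g₀ t) volume 0 t) :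
    TendstoUniformlyOn (fun i t => ∫ s in (0 : ℝ)..t, g i t s) (fun t => ∫ s in (0 : ℝ)..t, g₀ t s)
      l (Icc 0 T) := by
  rw [Metric.tendstoUniformlyOn_iff] at h ⊢
  intro ε hε
  filter_upwards [h (ε / (|T| + 1)) (by positivity)] with i hi t ht
  have hbound : ∀ s ∈ uIoc (0 : ℝ) t, ‖g₀ t s - g i t s‖ ≤ ε / (|T| + 1) := by
    intro s hs
    rw [uIoc_of_le ht.1] at hs
    rw [← dist_eq_norm]
    exact (hi (t, s) ⟨hs.1.le, hs.2, ht.2⟩).le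
  rw [dist_eq_norm, ← intervalIntegral.integral_sub (hg₀ t ht) (hg i t ht)]
  calc ‖∫ s in (0 : ℝ)..t, g₀ t s - g i t s‖ ≤ ε / (|T| + 1) * |t - 0| :=
        intervalIntegral.norm_integral_le_of_norm_le_const hbound
    _ ≤ ε / (|T| + 1) * |T| := by
        rw [sub_zero, abs_of_nonneg ht.1]
        gcongr
        exact ht.2.trans (le_abs_self T)
    _ < ε := by
        rw [div_mul_eq_mul_div, div_lt_iff₀ (by positivity)]
        nlinarith

namespace IsEvolutionSystem

variable {T : ℝ} {R : ℝ → ℝ → E →L[ℝ] E}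

theorem exists_forall_norm_apply_le (hR : IsEvolutionSystem T R) (y : E) :
    ∃ C, ∀ p ∈ evolDomain T, ‖R p.1 p.2 y‖ ≤ C :=
  (isCompact_evolDomain T).exists_bound_of_continuousOn (hR.strong_cont y)

theorem exists_forall_opNorm_le [CompleteSpace E] (hR : IsEvolutionSystem T R) :
    ∃ M, ∀ p ∈ evolDomain T, ‖R p.1 p.2‖ ≤ M := by
  obtain ⟨M, hM⟩ := banach_steinhaus (g := fun p : evolDomain T => R p.1.1 p.1.2) fun y =>
    (hR.exists_forall_norm_apply_le y).imp fun C hC p => hC p p.2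
  exact ⟨M, fun p hp => hM ⟨p, hp⟩⟩

theorem continuousOn_apply (hR : IsEvolutionSystem T R) {M : ℝ}
    (hM : ∀ p ∈ evolDomain T, ‖R p.1 p.2‖ ≤ M) {w : ℝ → E} (hw : ContinuousOn w (Icc 0 T))
    {t : ℝ} (ht : t ∈ Icc 0 T) : ContinuousOn (fun s => R t s (w s)) (Icc 0 t) := by
  have hmaps : MapsTo (fun s => (t, s)) (Icc 0 t) (evolDomain T) := fun s hs => ⟨hs.1, hs.2, ht.2⟩
  intro s hs
  exact ContinuousWithinAt.clm_apply_of_forall_norm_le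
    ((hR.strong_cont (w s) _ (hmaps hs)).comp
      (continuousWithinAt_const.prodMk continuousWithinAt_id) hmaps)
    (fun s' hs' => hM _ (hmaps hs'))
    (hw.mono (Icc_subset_Icc_right ht.2) s hs)

theorem intervalIntegrable_apply (hR : IsEvolutionSystem T R) {M : ℝ}
    (hM : ∀ p ∈ evolDomain T, ‖R p.1 p.2‖ ≤ M) {w : ℝ → E} (hw : ContinuousOn w (Icc 0 T))
    {t : ℝ} (ht : t ∈ Icc 0 T) : IntervalIntegrable (fun s => R t s (w s)) volume 0 t :=
  (hR.continuousOn_apply hM hw ht).intervalIntegrable_of_Icc ht.1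

theorem evolMap_sub_evolMap (hR : IsEvolutionSystem T R) {M : ℝ}
    (hM : ∀ p ∈ evolDomain T, ‖R p.1 p.2‖ ≤ M) {w w' : ℝ → E} (hw : ContinuousOn w (Icc 0 T))
    (hw' : ContinuousOn w' (Icc 0 T)) (x : E) {t : ℝ} (ht : t ∈ Icc 0 T) :
    evolMap R x w t - evolMap R x w' t = ∫ s in (0 : ℝ)..t, R t s (w s - w' s) := by
  simp only [evolMap, map_sub]
  rw [intervalIntegral.integral_sub (hR.intervalIntegrable_apply hM hw ht)
    (hR.intervalIntegrable_apply hM hw' ht)]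
  abel

theorem norm_sub_lt_mul_exp (hR : IsEvolutionSystem T R) {M : ℝ} (hM₀ : 0 ≤ M)
    (hM : ∀ p ∈ evolDomain T, ‖R p.1 p.2‖ ≤ M) {g : ℝ → E → E} {u v : ℝ → E} {x : E}
    {δ L a : ℝ} (hL : 0 ≤ L)
    (hLip : ∀ s ∈ Icc 0 T, ∀ y, ‖y - v s‖ < δ → ‖g s y - g s (v s)‖ ≤ L * ‖y - v s‖)
    (hu : ContinuousOn u (Icc 0 T)) (hv : ContinuousOn v (Icc 0 T))
    (hgu : ContinuousOn (fun s => g s (u s)) (Icc 0 T))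
    (hgv : ContinuousOn (fun s => g s (v s)) (Icc 0 T))
    (hmild : ∀ t ∈ Icc 0 T, u t = evolMap R x (fun s => g s (u s)) t)
    (herr : ∀ t ∈ Icc 0 T, ‖evolMap R x (fun s => g s (v s)) t - v t‖ < a)
    (haδ : a * Real.exp (M * L * T) ≤ δ) :
    ∀ t ∈ Icc 0 T, ‖u t - v t‖ < a * Real.exp (M * L * t) := by
  set c := M * L
  have hc : 0 ≤ c := mul_nonneg hM₀ hL
  have hexp_le : ∀ s ∈ Icc 0 T, a * Real.exp (c * s) ≤ δ := fun s hs =>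
    haδ.trans' <| by
      have ha : 0 ≤ a := (norm_nonneg _).trans (herr s hs).le
      gcongr
      exact hs.2
  refine forall_lt_of_forall_lt_on_Ico (hu.sub hv).norm (by fun_prop) fun t ht hbefore => ?_
  have hintegrand : ∀ s ∈ Ioo 0 t,
      ‖R t s (g s (u s) - g s (v s))‖ ≤ c * (a * Real.exp (c * s)) := by
    intro s hs
    have hsT : s ∈ Icc 0 T := ⟨hs.1.le, hs.2.le.trans ht.2⟩
    have hclose := hbefore s ⟨hs.1.le, hs.2⟩
    calc ‖R t s (g s (u s) - g s (v s))‖ ≤ M * ‖g s (u s) - g s (v s)‖ :=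
          ((R t s).le_opNorm _).trans (by gcongr; exact hM (t, s) ⟨hsT.1, hs.2.le, ht.2⟩)
      _ ≤ M * (L * (a * Real.exp (c * s))) := by
          gcongr
          exact (hLip s hsT _ (hclose.trans_le (hexp_le s hsT))).trans (by gcongr)
      _ = c * (a * Real.exp (c * s)) := by ring
  have hintegral :
      ‖∫ s in (0 : ℝ)..t, R t s (g s (u s) - g s (v s))‖ ≤ a * Real.exp (c * t) - a :=
    calc _ ≤ ∫ s in (0 : ℝ)..t, ‖R t s (g s (u s) - g s (v s))‖ :=
          intervalIntegral.norm_integral_le_integral_norm ht.1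
      _ ≤ ∫ s in (0 : ℝ)..t, c * (a * Real.exp (c * s)) :=
          intervalIntegral.integral_mono_on_of_le_Ioo ht.1
            (hR.intervalIntegrable_apply hM (hgu.sub hgv) ht).norm
            (Continuous.intervalIntegrable (by fun_prop) _ _) hintegrand
      _ = a * Real.exp (c * t) - a := integral_mul_exp_mul a c t
  calc ‖u t - v t‖
      = ‖(evolMap R x (fun s => g s (v s)) t - v t)
          + ∫ s in (0 : ℝ)..t, R t s (g s (u s) - g s (v s))‖ := by
        rw [← hR.evolMap_sub_evolMap hM hgu hgv x ht, hmild t ht]; abel_nf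
    _ ≤ ‖evolMap R x (fun s => g s (v s)) t - v t‖
          + ‖∫ s in (0 : ℝ)..t, R t s (g s (u s) - g s (v s))‖ := norm_add_le _ _
    _ < a + (a * Real.exp (c * t) - a) := add_lt_add_of_lt_of_le (herr t ht) hintegral
    _ = a * Real.exp (c * t) := by ring

end IsEvolutionSystem

theorem IsContinuousEvolFamily.exists_forall_opNorm_le [CompleteSpace E] {T : ℝ}
    {R : ℝ → ℝ → ℝ → E →L[ℝ] E} (hcont : IsContinuousEvolFamily T R)
    (hES : ∀ l ∈ Icc (0 : ℝ) 1, IsEvolutionSystem T (R l)) {lam : ℕ → ℝ} {lam₀ : ℝ}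
    (hlam : ∀ n, lam n ∈ Icc (0 : ℝ) 1) (hlam₀ : lam₀ ∈ Icc (0 : ℝ) 1)
    (hl : Tendsto lam atTop (𝓝 lam₀)) :
    ∃ M, 0 ≤ M ∧ (∀ n, ∀ p ∈ evolDomain T, ‖R (lam n) p.1 p.2‖ ≤ M) ∧
      ∀ p ∈ evolDomain T, ‖R lam₀ p.1 p.2‖ ≤ M := by
  obtain ⟨M₀, hM₀⟩ := (hES lam₀ hlam₀).exists_forall_opNorm_le
  obtain ⟨M, hM⟩ := banach_steinhaus
    (g := fun q : ℕ × evolDomain T => R (lam q.1) q.2.1.1 q.2.1.2) fun y =>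
      ((hcont y lam lam₀ hlam hlam₀ hl).exists_forall_norm_le
        (fun n => (hES _ (hlam n)).exists_forall_norm_apply_le y)
        ((hES lam₀ hlam₀).exists_forall_norm_apply_le y)).imp fun C hC q => hC q.1 q.2 q.2.2
  refine ⟨max (max M M₀) 0, le_max_right _ _, fun n p hp => ?_, fun p hp => ?_⟩
  · exact (hM (n, ⟨p, hp⟩)).trans ((le_max_left _ _).trans (le_max_left _ _))
  · exact (hM₀ p hp).trans ((le_max_right _ _).trans (le_max_left _ _))

section Convergence

variable {ι : Type*} {l : Filter ι} {T M : ℝ} {R : ι → ℝ → ℝ → E →L[ℝ] E}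

theorem tendstoUniformlyOn_evolMap {R₀ : ℝ → ℝ → E →L[ℝ] E}
    (hR : ∀ i, IsEvolutionSystem T (R i)) (hR₀ : IsEvolutionSystem T R₀)
    (hM : ∀ i, ∀ p ∈ evolDomain T, ‖R i p.1 p.2‖ ≤ M) (hM₀ : ∀ p ∈ evolDomain T, ‖R₀ p.1 p.2‖ ≤ M)
    (hconv : ∀ y, TendstoUniformlyOn (fun i p => R i p.1 p.2 y) (fun p => R₀ p.1 p.2 y) l
      (evolDomain T))
    {x : ι → E} {x₀ : E} (hx : Tendsto x l (𝓝 x₀)) {w : ι → ℝ → E} {w₀ : ℝ → E}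
    (hw : ∀ i, ContinuousOn (w i) (Icc 0 T)) (hw₀ : ContinuousOn w₀ (Icc 0 T))
    (hwconv : TendstoUniformlyOn w w₀ l (Icc 0 T)) :
    TendstoUniformlyOn (fun i => evolMap (R i) (x i) (w i)) (evolMap R₀ x₀ w₀) l (Icc 0 T) := by
  have hinitial : TendstoUniformlyOn (fun i t => R i t 0 (x i)) (fun t => R₀ t 0 x₀) l
      (Icc 0 T) :=
    ((TendstoUniformlyOn.clm_apply hconv hM hM₀ (hx.tendstoUniformlyOn_const _)
      (((finite_singleton x₀).subset (image_subset_iff.2 fun _ _ => rfl)).totallyBounded)).comp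
      fun t => (t, 0)).mono fun t ht => ⟨le_rfl, ht.1, ht.2⟩
  have hsnd : MapsTo Prod.snd (evolDomain T) (Icc 0 T) := fun p hp => ⟨hp.1, hp.2.1.trans hp.2.2⟩
  have hintegrand : TendstoUniformlyOn (fun i (p : ℝ × ℝ) => R i p.1 p.2 (w i p.2))
      (fun p => R₀ p.1 p.2 (w₀ p.2)) l (evolDomain T) :=
    TendstoUniformlyOn.clm_apply hconv hM hM₀ ((hwconv.comp Prod.snd).mono hsnd)
      ((isCompact_Icc.image_of_continuousOn hw₀).totallyBounded.subset
        (image_comp w₀ Prod.snd _ ▸ image_mono hsnd.image_subset))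
  exact hinitial.add (tendstoUniformlyOn_intervalIntegral_of_evolDomain hintegrand
    (fun i _ ht => (hR i).intervalIntegrable_apply (hM i) (hw i) ht)
    (fun _ ht => hR₀.intervalIntegrable_apply hM₀ hw₀ ht))

theorem tendstoUniformlyOn_of_tendstoUniformlyOn_evolMap (hR : ∀ i, IsEvolutionSystem T (R i))
    (hM₀ : 0 ≤ M) (hM : ∀ i, ∀ p ∈ evolDomain T, ‖R i p.1 p.2‖ ≤ M) {g : ι → ℝ → E → E}
    {u : ι → ℝ → E} {v : ℝ → E} {x : ι → E} {δ L : ℝ} (hδ : 0 < δ) (hL : 0 ≤ L)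
    (hLip : ∀ i, ∀ s ∈ Icc 0 T, ∀ y, ‖y - v s‖ < δ → ‖g i s y - g i s (v s)‖ ≤ L * ‖y - v s‖)
    (hu : ∀ i, ContinuousOn (u i) (Icc 0 T)) (hv : ContinuousOn v (Icc 0 T))
    (hgu : ∀ i, ContinuousOn (fun s => g i s (u i s)) (Icc 0 T))
    (hgv : ∀ i, ContinuousOn (fun s => g i s (v s)) (Icc 0 T))
    (hmild : ∀ i, ∀ t ∈ Icc 0 T, u i t = evolMap (R i) (x i) (fun s => g i s (u i s)) t)
    (herr : TendstoUniformlyOn (fun i => evolMap (R i) (x i) (fun s => g i s (v s))) v l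
      (Icc 0 T)) :
    TendstoUniformlyOn u v l (Icc 0 T) := by
  rw [Metric.tendstoUniformlyOn_iff] at herr ⊢
  intro ε hε
  set a := min ε δ / Real.exp (M * L * T)
  have haT : a * Real.exp (M * L * T) = min ε δ := div_mul_cancel₀ _ (Real.exp_ne_zero _)
  filter_upwards [herr a (by positivity)] with i hi t ht
  have hclose := (hR i).norm_sub_lt_mul_exp hM₀ (hM i) hL (hLip i) (hu i) hv (hgu i) (hgv i)
    (hmild i) (fun t ht => by rw [← dist_eq_norm, dist_comm]; exact hi t ht)
    (haT.trans_le (min_le_right ε δ)) t ht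
  have ha : 0 ≤ a := by positivity
  have hc : 0 ≤ M * L := mul_nonneg hM₀ hL
  rw [dist_comm, dist_eq_norm]
  calc ‖u i t - v t‖ < a * Real.exp (M * L * t) := hclose
    _ ≤ a * Real.exp (M * L * T) := by gcongr; exact ht.2
    _ ≤ ε := haT.trans_le (min_le_left ε δ)

end Convergence

section Nonlinearity

variable {G : Type*} [NormedAddCommGroup G] {T : ℝ} {F : ℝ → G → ℝ → G}

namespace ParamContinuous

theorem continuousOn_comp (hF : ParamContinuous T F) {v : ℝ → G}
    (hv : ContinuousOn v (Icc 0 T)) {l : ℝ} (hl : l ∈ Icc (0 : ℝ) 1) :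
    ContinuousOn (fun s => F s (v s) l) (Icc 0 T) :=
  hF.comp (continuousOn_id.prodMk (hv.prodMk continuousOn_const))
    fun _ hs => ⟨hs, mem_univ _, hl⟩

theorem tendstoUniformlyOn_comp (hF : ParamContinuous T F) {v : ℝ → G}
    (hv : ContinuousOn v (Icc 0 T)) {ι : Type*} {p : Filter ι} {lam : ι → ℝ} {lam₀ : ℝ}
    (hlam : ∀ i, lam i ∈ Icc (0 : ℝ) 1) (hlam₀ : lam₀ ∈ Icc (0 : ℝ) 1)
    (hl : Tendsto lam p (𝓝 lam₀)) :
    TendstoUniformlyOn (fun i s => F s (v s) (lam i)) (fun s => F s (v s) lam₀) p (Icc 0 T) := by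
  have hUC : UniformContinuousOn (fun q : ℝ × ℝ => F q.2 (v q.2) q.1) (Icc 0 1 ×ˢ Icc 0 T) :=
    (isCompact_Icc.prod isCompact_Icc).uniformContinuousOn_of_continuous
      (hF.comp (continuousOn_snd.prodMk ((hv.comp continuousOn_snd fun _ hq => hq.2).prodMk
        continuousOn_fst)) fun _ hq => ⟨hq.2, mem_univ _, hq.1⟩)
  have hl' : Tendsto lam p (𝓝[Icc 0 1] lam₀) :=
    tendsto_nhdsWithin_iff.2 ⟨hl, Eventually.of_forall hlam⟩
  exact fun U hU =>
    hl'.eventually (hUC.tendstoUniformlyOn (F := fun l s => F s (v s) l) hlam₀ U hU)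

end ParamContinuous

theorem ParamLocallyLipschitz.exists_lipschitz_near_compact (hF : ParamLocallyLipschitz T F)
    {K : Set G} (hK : IsCompact K) :
    ∃ δ > 0, ∃ L ≥ 0, ∀ t ∈ Icc (0 : ℝ) T, ∀ l ∈ Icc (0 : ℝ) 1, ∀ z ∈ K, ∀ y,
      ‖y - z‖ < δ → ‖F t y l - F t z l‖ ≤ L * ‖y - z‖ := by
  choose r hr L hL hLip using hF
  obtain ⟨c, hc⟩ := hK.elim_finite_subcover (fun z => Metric.ball z (r z))
    (fun _ => Metric.isOpen_ball) fun z _ => mem_iUnion.2 ⟨z, Metric.mem_ball_self (hr z)⟩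
  obtain ⟨δ, hδ, hball⟩ := lebesgue_number_lemma_of_metric hK
    (c := fun z : c => Metric.ball (z : G) (r z)) (fun _ => Metric.isOpen_ball) fun y hy => by
      obtain ⟨z, hz, hyz⟩ := mem_iUnion₂.1 (hc hy)
      exact mem_iUnion.2 ⟨⟨z, hz⟩, hyz⟩
  refine ⟨δ, hδ, ∑ z ∈ c, L z, Finset.sum_nonneg fun z _ => (hL z).le,
    fun t ht l hl z hz y hy => ?_⟩
  obtain ⟨⟨z', hz'⟩, hsub⟩ := hball z hz
  calc ‖F t y l - F t z l‖ ≤ L z' * ‖y - z‖ :=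
        hLip z' t ht l hl y (hsub (by rwa [Metric.mem_ball, dist_eq_norm]))
          z (hsub (Metric.mem_ball_self hδ))
    _ ≤ (∑ z ∈ c, L z) * ‖y - z‖ := by
        gcongr
        exact Finset.single_le_sum (fun z _ => (hL z).le) hz'

end Nonlinearity

theorem statement_7_general
    {E : Type*} [NormedAddCommGroup E] [NormedSpace ℝ E] [CompleteSpace E]
    (T : ℝ)
    (R : ℝ → ℝ → ℝ → E →L[ℝ] E)
    (hES : ∀ lam ∈ Icc (0 : ℝ) 1, IsEvolutionSystem T (R lam))
    (hcont : IsContinuousEvolFamily T R)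
    (F : ℝ → E → ℝ → E)
    (hFc : ParamContinuous T F)
    (hFlip : ParamLocallyLipschitz T F)
    (x : ℕ → E) (x0 : E) (lam : ℕ → ℝ) (lam0 : ℝ)
    (hlam : ∀ n, lam n ∈ Icc (0 : ℝ) 1) (hlam0 : lam0 ∈ Icc (0 : ℝ) 1)
    (hx : Tendsto x atTop (𝓝 x0)) (hl : Tendsto lam atTop (𝓝 lam0))
    (u : ℕ → ℝ → E) (u0 : ℝ → E)
    (hu : ∀ n, IsMildSolution T (R (lam n)) (fun s y => F s y (lam n)) (x n) (u n))
    (hu0 : IsMildSolution T (R lam0) (fun s y => F s y lam0) x0 u0) :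
    TendstoUniformlyOn (fun n t => u n t) u0 atTop (Icc (0 : ℝ) T) := by
  obtain ⟨M, hM_nonneg, hM, hM₀⟩ := hcont.exists_forall_opNorm_le hES hlam hlam0 hl
  obtain ⟨δ, hδ, L, hL, hLip⟩ :=
    hFlip.exists_lipschitz_near_compact (isCompact_Icc.image_of_continuousOn hu0.1)
  have hdefect : TendstoUniformlyOn
      (fun n => evolMap (R (lam n)) (x n) (fun s => F s (u0 s) (lam n))) u0 atTop (Icc 0 T) :=
    (tendstoUniformlyOn_evolMap (fun n => hES _ (hlam n)) (hES lam0 hlam0) hM hM₀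
      (fun y => hcont y lam lam0 hlam hlam0 hl) hx
      (fun n => hFc.continuousOn_comp hu0.1 (hlam n)) (hFc.continuousOn_comp hu0.1 hlam0)
      (hFc.tendstoUniformlyOn_comp hu0.1 hlam hlam0 hl)).congr_right
      fun t ht => (hu0.2 t ht).symm
  exact tendstoUniformlyOn_of_tendstoUniformlyOn_evolMap (fun n => hES _ (hlam n)) hM_nonneg hM
    hδ hL (fun n s hs y hy => hLip s hs (lam n) (hlam n) (u0 s) (mem_image_of_mem u0 hs) y hy)
    (fun n => (hu n).1) hu0.1 (fun n => hFc.continuousOn_comp (hu n).1 (hlam n))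
    (fun n => hFc.continuousOn_comp hu0.1 (hlam n)) (fun n => (hu n).2) hdefect

/-- Proposition 3(ii), Continuity: if `(xₙ,λₙ) → (x₀,λ₀)` in `E × [0,1]`,
the mild solutions `u(·;0,T,xₙ,λₙ)` converge to `u(·;0,T,x₀,λ₀)` in `C([0,T],E)`. -/
theorem statement_7
    {E : Type*} [NormedAddCommGroup E] [NormedSpace ℝ E] [CompleteSpace E]
    [TopologicalSpace.SeparableSpace E]
    (T : ℝ) (hT : 0 < T)
    (R : ℝ → ℝ → ℝ → E →L[ℝ] E)
    (hES : ∀ lam ∈ Icc (0 : ℝ) 1, IsEvolutionSystem T (R lam))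
    (hcont : IsContinuousEvolFamily T R)
    (F : ℝ → E → ℝ → E)
    (hFc : ParamContinuous T F)
    (hFlip : ParamLocallyLipschitz T F)
    (hFsub : ParamSublinear T F)
    (k : ℝ) (hk : 0 ≤ k)
    (hFk : ∀ Q : Set E, Bornology.IsBounded Q →
      hausdorffMNC (paramImage T F Q) ≤ k * hausdorffMNC Q)
    (x : ℕ → E) (x0 : E) (lam : ℕ → ℝ) (lam0 : ℝ)
    (hlam : ∀ n, lam n ∈ Icc (0 : ℝ) 1) (hlam0 : lam0 ∈ Icc (0 : ℝ) 1)
    (hx : Tendsto x atTop (𝓝 x0)) (hl : Tendsto lam atTop (𝓝 lam0))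
    (u : ℕ → ℝ → E) (u0 : ℝ → E)
    (hu : ∀ n, IsMildSolution T (R (lam n)) (fun s y => F s y (lam n)) (x n) (u n))
    (hu0 : IsMildSolution T (R lam0) (fun s y => F s y lam0) x0 u0) :
    TendstoUniformlyOn (fun n t => u n t) u0 atTop (Icc (0 : ℝ) T) :=
  statement_7_general T R hES hcont F hFc hFlip x x0 lam lam0 hlam hlam0 hx hl u u0 hu hu0
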